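/- For φ(t) = tanh(t)², the inequality φ'(t)² ≥ 2 φ(t) φ''(t) holds for all real t. -/

import Mathlib

/-!
For `φ = g ^ 2` one has `φ' ^ 2 - 2 φ φ'' = -4 g ^ 3 g''`, and `tanh'' = -2 tanh (1 - tanh ^ 2)`,
so for `g = tanh` the difference is `8 tanh ^ 4 (1 - tanh ^ 2)`, which is nonnegative as `|tanh| < 1`.
-/

open Real

theorem Real.hasDerivAt_tanh (x : ℝ) : HasDerivAt tanh (1 - tanh x ^ 2) x := by
  have h := (hasDerivAt_sinh x).div (hasDerivAt_cosh x) (cosh_pos x).ne'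
  rw [show sinh / cosh = tanh from funext fun y => (tanh_eq_sinh_div_cosh y).symm] at h
  refine h.congr_deriv ?_
  rw [tanh_eq_sinh_div_cosh, div_pow, one_sub_div (pow_ne_zero 2 (cosh_pos x).ne'),
    cosh_sq_sub_sinh_sq, ← cosh_sq_sub_sinh_sq x]
  ring

theorem Real.differentiable_tanh : Differentiable ℝ tanh :=
  fun x => (hasDerivAt_tanh x).differentiableAt

theorem Real.deriv_tanh : deriv tanh = fun x => 1 - tanh x ^ 2 :=
  funext fun x => (hasDerivAt_tanh x).deriv

theorem Real.hasDerivAt_deriv_tanh (x : ℝ) :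
    HasDerivAt (deriv tanh) (-2 * tanh x * (1 - tanh x ^ 2)) x := by
  rw [deriv_tanh]
  refine (((hasDerivAt_tanh x).fun_pow 2).const_sub 1).congr_deriv ?_
  push_cast
  ring

theorem sq_deriv_fun_sq_sub_two_mul_sq_mul_deriv_deriv_fun_sq {g : ℝ → ℝ} {x : ℝ}
    (hg : Differentiable ℝ g) (hg' : DifferentiableAt ℝ (deriv g) x) :
    deriv (fun s => g s ^ 2) x ^ 2 - 2 * g x ^ 2 * deriv (deriv fun s => g s ^ 2) x =
      -4 * g x ^ 3 * deriv (deriv g) x := by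
  have hderiv : deriv (fun s => g s ^ 2) = fun s => 2 * g s * deriv g s := by
    funext s
    rw [deriv_fun_pow (hg s)]
    push_cast
    ring
  rw [hderiv, (((hg x).hasDerivAt.const_mul 2).fun_mul hg'.hasDerivAt).deriv]
  ring

theorem tanh_sq_deriv_ineq :
    ∀ t : ℝ,
      (deriv (fun s => Real.tanh s ^ 2) t) ^ 2 ≥
        2 * (Real.tanh t ^ 2) * deriv (deriv (fun s => Real.tanh s ^ 2)) t := by
  intro t
  have hdd := hasDerivAt_deriv_tanh t
  rw [ge_iff_le, ← sub_nonneg, sq_deriv_fun_sq_sub_two_mul_sq_mul_deriv_deriv_fun_sq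
    differentiable_tanh hdd.differentiableAt, hdd.deriv]
  have key : 0 ≤ 8 * tanh t ^ 4 * (1 - tanh t ^ 2) :=
    mul_nonneg (by positivity) (sub_nonneg.2 (tanh_sq_lt_one t).le)
  exact key.trans_eq (by ring)
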